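/- (Larman–Rogers subgraph bound) Let G = (V,E) be a finite induced subgraph of the unit distance graph in \mathbb{R}^n, i.e. V = \{v_1,\dots,v_M\} \subset \mathbb{R}^n and E consists of the pairs at Euclidean distance 1. Then m_1(\mathbb{R}^n) \leq \alpha(G)/|V|, where m_1(\mathbb{R}^n) is the supremum of densities of Lebesgue measurable subsets of \mathbb{R}^n avoiding distance 1. -/

import Mathlib

open scoped Classical
open MeasureTheory

/-- The independence number of the unit-distance graph induced on a finite set of
points of `ℝⁿ` (edges join points at Euclidean distance 1). -/
noncomputable def indepNum {n : ℕ} (V : Finset (EuclideanSpace ℝ (Fin n))) : ℕ :=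
  (V.powerset.filter (fun A => ∀ u ∈ A, ∀ v ∈ A, dist u v ≠ 1)).sup Finset.card

/-- The (upper) density of a subset of `ℝⁿ`. -/
noncomputable def density (n : ℕ) (S : Set (EuclideanSpace ℝ (Fin n))) : ℝ :=
  Filter.limsup
    (fun R : ℝ => (volume (S ∩ {x : EuclideanSpace ℝ (Fin n) | ∀ i, |x i| ≤ R})).toReal
      / (2*R)^n)
    Filter.atTop

/-- The supremum of densities of measurable sets of `ℝⁿ` avoiding distance 1. -/
noncomputable def m1 (n : ℕ) : ℝ :=
  sSup {d : ℝ | ∃ S : Set (EuclideanSpace ℝ (Fin n)), MeasurableSet S ∧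
    (∀ x ∈ S, ∀ y ∈ S, dist x y ≠ 1) ∧ d = density n S}

/-! Let `S` be measurable and avoid distance 1. For every point `x`, the `v ∈ V` with `x + v ∈ S`
are pairwise not at distance 1, so there are at most `α(V)` of them. Integrating over a large cube
and using translation invariance of Lebesgue measure, `|V| · vol(S ∩ [-R, R]ⁿ)` is at most
`α(V) · vol([-R - c, R + c]ⁿ)`, where `c` bounds the coordinates of `V`; divide by `(2R)ⁿ` and let
`R → ∞`. -/

open scoped ENNReal Finset
open Filter Topology

section

variable {n : ℕ}

def cube (n : ℕ) (R : ℝ) : Set (EuclideanSpace ℝ (Fin n)) := {x | ∀ i, |x i| ≤ R}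

lemma cube_eq_preimage (R : ℝ) :
    cube n R = (MeasurableEquiv.toLp 2 (Fin n → ℝ)).symm ⁻¹'
      Set.univ.pi fun _ => Set.Icc (-R) R := by
  ext x
  simp [cube, abs_le, MeasurableEquiv.toLp_symm_apply, Pi.le_def, forall_and]

lemma volume_cube (R : ℝ) : volume (cube n R) = ENNReal.ofReal (2 * R) ^ n := by
  rw [cube_eq_preimage,
    (EuclideanSpace.volume_preserving_symm_measurableEquiv_toLp (Fin n)).measure_preimage
      (MeasurableSet.univ_pi fun _ => measurableSet_Icc).nullMeasurableSet, volume_pi_pi]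
  simp [Real.volume_Icc, two_mul]

lemma preimage_add_cube_subset {v : EuclideanSpace ℝ (Fin n)} {c R : ℝ} (hv : ∀ i, |v i| ≤ c) :
    (· + v) ⁻¹' cube n R ⊆ cube n (R + c) := by
  intro x hx i
  have hxv : |x i + v i| ≤ R := hx i
  have := abs_sub (x i + v i) (v i)
  simp only [add_sub_cancel_right] at this
  linarith [hv i]

lemma exists_forall_abs_apply_le (V : Finset (EuclideanSpace ℝ (Fin n))) :
    ∃ c, 0 ≤ c ∧ ∀ v ∈ V, ∀ i, |v i| ≤ c := by
  obtain ⟨C, hC⟩ := isBounded_iff_forall_norm_le.1 V.finite_toSet.isBounded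
  exact ⟨max C 0, le_max_right _ _, fun v hv i =>
    (PiLp.norm_apply_le v i).trans ((hC v hv).trans (le_max_left _ _))⟩

variable {V : Finset (EuclideanSpace ℝ (Fin n))} {S : Set (EuclideanSpace ℝ (Fin n))}

lemma card_filter_add_mem_le_indepNum (hS : ∀ x ∈ S, ∀ y ∈ S, dist x y ≠ 1)
    (x : EuclideanSpace ℝ (Fin n)) : #(V.filter (x + · ∈ S)) ≤ indepNum V := by
  refine Finset.le_sup (f := Finset.card) (Finset.mem_filter.2 ⟨?_, fun u hu v hv => ?_⟩)
  · exact Finset.mem_powerset.2 (Finset.filter_subset _ _)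
  · simpa only [dist_add_left] using hS _ (Finset.mem_filter.1 hu).2 _ (Finset.mem_filter.1 hv).2

lemma sum_volume_preimage_add_inter_le (hSm : MeasurableSet S)
    (hS : ∀ x ∈ S, ∀ y ∈ S, dist x y ≠ 1) (B : Set (EuclideanSpace ℝ (Fin n))) :
    ∑ v ∈ V, volume ((· + v) ⁻¹' S ∩ B) ≤ indepNum V * volume B := by
  have hmeas (v : EuclideanSpace ℝ (Fin n)) : MeasurableSet ((· + v) ⁻¹' S) :=
    hSm.preimage (measurable_add_const v)
  have hcount (x : EuclideanSpace ℝ (Fin n)) :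
      ∑ v ∈ V, ((· + v) ⁻¹' S).indicator 1 x ≤ (indepNum V : ℝ≥0∞) := by
    simp only [Set.indicator_apply, Set.mem_preimage, Pi.one_apply, Finset.sum_boole]
    exact_mod_cast card_filter_add_mem_le_indepNum hS x
  calc ∑ v ∈ V, volume ((· + v) ⁻¹' S ∩ B)
      = ∑ v ∈ V, ∫⁻ x in B, ((· + v) ⁻¹' S).indicator 1 x := by
        refine Finset.sum_congr rfl fun v _ => ?_
        rw [lintegral_indicator_one (hmeas v), Measure.restrict_apply (hmeas v)]
    _ = ∫⁻ x in B, ∑ v ∈ V, ((· + v) ⁻¹' S).indicator 1 x :=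
        (lintegral_finsetSum _ fun v _ => measurable_const.indicator (hmeas v)).symm
    _ ≤ ∫⁻ _ in B, (indepNum V : ℝ≥0∞) := lintegral_mono hcount
    _ = indepNum V * volume B := setLIntegral_const _ _

lemma card_mul_volume_inter_cube_le (hSm : MeasurableSet S)
    (hS : ∀ x ∈ S, ∀ y ∈ S, dist x y ≠ 1) {c : ℝ} (hc : ∀ v ∈ V, ∀ i, |v i| ≤ c) (R : ℝ) :
    #V * volume (S ∩ cube n R) ≤ indepNum V * volume (cube n (R + c)) := by
  have htranslate : ∀ v ∈ V, volume (S ∩ cube n R) ≤ volume ((· + v) ⁻¹' S ∩ cube n (R + c)) :=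
    fun v hv => calc
      volume (S ∩ cube n R) = volume ((· + v) ⁻¹' (S ∩ cube n R)) :=
        (measure_preimage_add_right volume v _).symm
      _ ≤ _ := measure_mono (Set.inter_subset_inter_right _ (preimage_add_cube_subset (hc v hv)))
  calc #V * volume (S ∩ cube n R) = ∑ _v ∈ V, volume (S ∩ cube n R) := by
        rw [Finset.sum_const, nsmul_eq_mul]
    _ ≤ ∑ v ∈ V, volume ((· + v) ⁻¹' S ∩ cube n (R + c)) := Finset.sum_le_sum htranslate
    _ ≤ _ := sum_volume_preimage_add_inter_le hSm hS _

lemma toReal_volume_inter_cube_le (hV : V.Nonempty) (hSm : MeasurableSet S)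
    (hS : ∀ x ∈ S, ∀ y ∈ S, dist x y ≠ 1) {c : ℝ} (hc : ∀ v ∈ V, ∀ i, |v i| ≤ c) {R : ℝ}
    (hRc : 0 ≤ R + c) :
    (volume (S ∩ cube n R)).toReal ≤ indepNum V / #V * (2 * (R + c)) ^ n := by
  have hfin : indepNum V * volume (cube n (R + c)) ≠ ⊤ := by
    rw [volume_cube]; finiteness
  have h := ENNReal.toReal_mono hfin (card_mul_volume_inter_cube_le hSm hS hc R)
  rw [ENNReal.toReal_mul, ENNReal.toReal_mul, volume_cube, ENNReal.toReal_pow,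
    ENNReal.toReal_ofReal (by linarith), ENNReal.toReal_natCast, ENNReal.toReal_natCast] at h
  rw [div_mul_eq_mul_div, le_div_iff₀ (by exact_mod_cast hV.card_pos), mul_comm]
  exact h

lemma density_le_of_toReal_volume_inter_cube_le {a c : ℝ}
    (h : ∀ᶠ R in atTop, (volume (S ∩ cube n R)).toReal ≤ a * (2 * (R + c)) ^ n) :
    density n S ≤ a := by
  have hratio : Tendsto (fun R : ℝ => a * (1 + c / R) ^ n) atTop (𝓝 a) := by
    simpa using ((tendsto_const_nhds (x := (1 : ℝ))).add
      (tendsto_id.const_div_atTop c)).pow n |>.const_mul a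
  have hle : ∀ᶠ R in atTop,
      (volume (S ∩ cube n R)).toReal / (2 * R) ^ n ≤ a * (1 + c / R) ^ n := by
    filter_upwards [h, eventually_gt_atTop 0] with R hR hpos
    refine (div_le_div_of_nonneg_right hR (by positivity)).trans_eq ?_
    rw [mul_div_assoc, ← div_pow]
    congr 2
    field_simp
  have hcobdd : IsCoboundedUnder (· ≤ ·) atTop
      fun R : ℝ => (volume (S ∩ cube n R)).toReal / (2 * R) ^ n :=
    isCoboundedUnder_le_of_eventually_le atTop (x := 0) <| by
      filter_upwards [eventually_gt_atTop 0] with R hR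
      positivity
  calc density n S ≤ limsup (fun R : ℝ => a * (1 + c / R) ^ n) atTop :=
        limsup_le_limsup hle hcobdd hratio.isBoundedUnder_le
    _ = a := hratio.limsup_eq

end

theorem larman_rogers_subgraph_bound (n : ℕ)
    (V : Finset (EuclideanSpace ℝ (Fin n))) (hV : V.Nonempty) :
    m1 n ≤ (indepNum V : ℝ) / V.card := by
  refine Real.sSup_le ?_ (by positivity)
  rintro _ ⟨S, hSm, hS, rfl⟩
  obtain ⟨c, hc0, hc⟩ := exists_forall_abs_apply_le V
  refine density_le_of_toReal_volume_inter_cube_le (c := c) ?_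
  filter_upwards [eventually_ge_atTop 0] with R hR
  exact toReal_volume_inter_cube_le hV hSm hS hc (by linarith)
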